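/- Let Γ be a tropical curve of genus g, let D be a divisor of nonnegative rank on Γ, and let P ∈ Γ. Then the coefficient of the P-reduced divisor D_P at P satisfies D_P(P) ≥ deg(D) − g. -/

import Mathlib

open scoped Classical

/-- A combinatorial model of a metric graph: a finite multigraph with positive
edge lengths. -/
structure GraphModel where
  V : Type
  E : Type
  [fintV : Fintype V]
  [fintE : Fintype E]
  src : E → V
  tgt : E → V
  len : E → ℝ
  len_pos : ∀ e, 0 < len e

attribute [instance] GraphModel.fintV GraphModel.fintE

/-- A (compact, connected) tropical curve: a compact connected metric space `Γ`
which is the geometric realization of a finite multigraph with positive edge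
lengths, equipped with the induced path metric.  Each edge `e` is realized by a
parametrization `edge e : [0, len e] → Γ` joining its endpoints, injective on the
interior, the interiors of distinct edges are disjoint and avoid the vertices,
the edges and vertices cover `Γ`, and the metric is the associated path metric. -/
structure TropicalCurve where
  Γ : Type
  [met : MetricSpace Γ]
  [cpt : CompactSpace Γ]
  [conn : ConnectedSpace Γ]
  G : GraphModel
  vtx : G.V → Γ
  edge : G.E → ℝ → Γ
  vtx_inj : Function.Injective vtx
  edge_src : ∀ e, edge e 0 = vtx (G.src e)
  edge_tgt : ∀ e, edge e (G.len e) = vtx (G.tgt e)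
  edge_inj : ∀ e, Set.InjOn (edge e) (Set.Ioo 0 (G.len e))
  interior_disjoint : ∀ e e' t t', t ∈ Set.Ioo 0 (G.len e) → t' ∈ Set.Ioo 0 (G.len e') →
    edge e t = edge e' t' → e = e' ∧ t = t'
  interior_not_vtx : ∀ e t v, t ∈ Set.Ioo 0 (G.len e) → edge e t ≠ vtx v
  cover : ∀ x : Γ, (∃ v, x = vtx v) ∨ ∃ e t, t ∈ Set.Ioo 0 (G.len e) ∧ x = edge e t
  path_metric : ∀ x y : Γ, dist x y = sInf { d : ℝ | ∃ (n : ℕ) (p : ℕ → Γ) (δ : ℕ → ℝ),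
    p 0 = x ∧ p n = y ∧ (∀ i < n, ∃ (e : G.E) (s t : ℝ), s ∈ Set.Icc 0 (G.len e) ∧
      t ∈ Set.Icc 0 (G.len e) ∧ p i = edge e s ∧ p (i+1) = edge e t ∧ δ i = |s - t|) ∧
    d = ∑ i ∈ Finset.range n, δ i }

attribute [instance] TropicalCurve.met TropicalCurve.cpt TropicalCurve.conn

namespace TropicalCurve

variable (C : TropicalCurve)

/-- A divisor on a tropical curve: a finitely supported function `Γ → ℤ`. -/
abbrev Divisor := C.Γ →₀ ℤ

/-- A divisor is effective if all its coefficients are nonnegative. -/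
def Effective (D : Divisor C) : Prop := ∀ v, 0 ≤ D v

/-- The degree of a divisor: the sum of its coefficients. -/
def deg (D : Divisor C) : ℤ := D.sum fun _ n => n

/-- `f` has (outgoing) slope `m` to the right of the point with parameter `t₀`
on the edge `e`. -/
def HasSlopeR (f : C.Γ → ℝ) (e : C.G.E) (t₀ : ℝ) (m : ℤ) : Prop :=
  ∃ ε > 0, t₀ + ε ≤ C.G.len e ∧ ∀ s ∈ Set.Icc t₀ (t₀ + ε),
    f (C.edge e s) = f (C.edge e t₀) + m * (s - t₀)

/-- `f` has (outgoing) slope `m` to the left of the point with parameter `t₀`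
on the edge `e`. -/
def HasSlopeL (f : C.Γ → ℝ) (e : C.G.E) (t₀ : ℝ) (m : ℤ) : Prop :=
  ∃ ε > 0, 0 ≤ t₀ - ε ∧ ∀ s ∈ Set.Icc (t₀ - ε) t₀,
    f (C.edge e s) = f (C.edge e t₀) + m * (t₀ - s)

/-- The branches (outgoing directions) at a point `x` of a tropical curve.  A
branch is encoded by an edge `e`, a parameter `t` with `edge e t = x`, and a
Boolean : `true` for the rightward direction, `false` for the leftward one. -/
def IsBranchAt (b : C.G.E × ℝ × Bool) (x : C.Γ) : Prop :=
  C.edge b.1 b.2.1 = x ∧ b.2.1 ∈ Set.Icc 0 (C.G.len b.1) ∧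
    (if b.2.2 then b.2.1 < C.G.len b.1 else 0 < b.2.1)

/-- `ord_f(x) = n` : the sum of the outgoing slopes of `f` over all branches
emanating from `x` equals `n`. -/
def HasOrderAt (f : C.Γ → ℝ) (x : C.Γ) (n : ℤ) : Prop :=
  ∃ (S : Finset (C.G.E × ℝ × Bool)) (m : C.G.E × ℝ × Bool → ℤ),
    (∀ b, b ∈ S ↔ C.IsBranchAt b x) ∧
    (∀ b ∈ S, if b.2.2 then C.HasSlopeR f b.1 b.2.1 (m b)
      else C.HasSlopeL f b.1 b.2.1 (m b)) ∧
    n = ∑ b ∈ S, m b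

/-- A rational function on a tropical curve: a continuous function which is
piecewise linear with integer slopes and finitely many linear pieces on every
edge. -/
def IsRational (f : C.Γ → ℝ) : Prop :=
  Continuous f ∧ ∀ e : C.G.E, ∃ (n : ℕ) (t : ℕ → ℝ), 0 < n ∧ t 0 = 0 ∧ t n = C.G.len e ∧
    (∀ i < n, t i < t (i+1)) ∧
    ∀ i < n, ∃ (m : ℤ) (b : ℝ), ∀ s ∈ Set.Icc (t i) (t (i+1)),
      f (C.edge e s) = m * s + b

/-- Two divisors are linearly equivalent if their difference is the divisor of a
rational function: `D - D' = div(f)`. -/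
def LinEquiv (D D' : Divisor C) : Prop :=
  ∃ f : C.Γ → ℝ, C.IsRational f ∧ ∀ x, C.HasOrderAt f x (D x - D' x)

/-- `f ∈ R(D)` : `f` is a rational function with `D + div(f) ≥ 0`. -/
def InR (D : Divisor C) (f : C.Γ → ℝ) : Prop :=
  C.IsRational f ∧ ∃ E : Divisor C, C.Effective E ∧ ∀ x, C.HasOrderAt f x (E x - D x)

/-- The branch `b` at `v` leaves the set `X`: some initial punctured segment
along `b` stays in `Γ ∖ (X ∖ {v})`. -/
def BranchLeaving (X : Set C.Γ) (v : C.Γ) (b : C.G.E × ℝ × Bool) : Prop :=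
  C.IsBranchAt b v ∧
    (if b.2.2 then ∃ ε > 0, b.2.1 + ε ≤ C.G.len b.1 ∧
        ∀ s ∈ Set.Ioc b.2.1 (b.2.1 + ε), C.edge b.1 s ∈ X → C.edge b.1 s = v
      else ∃ ε > 0, 0 ≤ b.2.1 - ε ∧
        ∀ s ∈ Set.Ico (b.2.1 - ε) b.2.1, C.edge b.1 s ∈ X → C.edge b.1 s = v)

/-- `deg_X^out(v)` : the number of edges (branch directions) leaving `X` at `v`,
i.e. the maximal number of internally disjoint segments in `Γ ∖ (X ∖ {v})` with
an end at `v`. -/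
noncomputable def outDeg (X : Set C.Γ) (v : C.Γ) : ℕ :=
  {b | C.BranchLeaving X v b}.ncard

/-- The degree (valence) of a point: the number of branches of `Γ` at `v`. -/
noncomputable def pointDeg (v : C.Γ) : ℕ := C.outDeg {v} v

/-- `D` is `v₀`-reduced: its coefficients away from `v₀` are nonnegative, and
every closed connected subset `X ⊆ Γ` avoiding `v₀` has a non-saturated boundary
point, i.e. some `v ∈ ∂X` with `D(v) < deg_X^out(v)`. -/
def IsReduced (v₀ : C.Γ) (D : Divisor C) : Prop :=
  (∀ v, v ≠ v₀ → 0 ≤ D v) ∧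
  ∀ X : Set C.Γ, IsClosed X → IsConnected X → v₀ ∉ X →
    ∃ v ∈ frontier X, D v < (C.outDeg X v : ℤ)

/-- `D` is linearly equivalent to an effective divisor. -/
def EquivEffective (D : Divisor C) : Prop :=
  ∃ E : Divisor C, C.Effective E ∧ C.LinEquiv D E

/-- The rank of a divisor: the largest `r ≥ -1` such that for every effective
divisor `E` of degree `r`, `D - E` is linearly equivalent to an effective
divisor (`-1` when `D` itself is not equivalent to an effective divisor). -/
noncomputable def rank (D : Divisor C) : ℤ :=
  sSup {r : ℤ | -1 ≤ r ∧ ∀ E : Divisor C, C.Effective E → C.deg E = r →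
    C.EquivEffective (D - E)}

/-- The genus of a tropical curve: its first Betti number, computed from any
model as `#E - #V + 1`. -/
noncomputable def genus : ℤ :=
  (Fintype.card C.G.E : ℤ) - (Fintype.card C.G.V : ℤ) + 1

/-- `D` is very ample: the rational functions in `R(D)` separate the points
of `Γ`. -/
def VeryAmple (D : Divisor C) : Prop :=
  ∀ P Q : C.Γ, P ≠ Q → ∃ f g : C.Γ → ℝ, C.InR D f ∧ C.InR D g ∧ f P - g P ≠ f Q - g Q

/-- `D` is ample: some positive integer multiple of `D` is very ample. -/
def Ample (D : Divisor C) : Prop := ∃ m : ℕ, 0 < m ∧ C.VeryAmple (m • D)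

end TropicalCurve

/-!
Linear equivalence preserves the degree, because the orders of a rational function telescope along
every edge. It therefore suffices to show that a `P`-reduced divisor has degree at most `g` away
from `P`. Refine the model so that `P` and the support of `D_P` become vertices; the refined model
still has `#E - #V + 1 = g`. Dhar's burning argument: for every nonempty set `A` of refined
vertices avoiding `P`, reducedness applied to a connected component of `A` together with the
refined edges inside `A` yields `v ∈ A` such that `D_P(v)` is less than the number of refined edges
from `v` leaving `A`. Removing such vertices one at a time bounds `∑_{v ≠ P} (D_P(v) + 1)` by `#E`,
that is, `∑_{v ≠ P} D_P(v) ≤ #E - #V + 1 = g`.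
-/

theorem IsClosed.connectedComponentIn {α : Type*} [TopologicalSpace α] {F : Set α}
    (hF : IsClosed F) (x : α) : IsClosed (connectedComponentIn F x) := by
  refine closure_subset_iff_isClosed.1 ?_
  by_cases hx : x ∈ F
  · exact isPreconnected_connectedComponentIn.closure.subset_connectedComponentIn
      (subset_closure (mem_connectedComponentIn hx))
      (hF.closure_subset_iff.2 (connectedComponentIn_subset F x))
  · simp [connectedComponentIn_eq_empty hx]

namespace Finset

variable {α : Type*} [LinearOrder α]

def consecutivePairs (T : Finset α) : Finset (α × α) :=
  (T ×ˢ T).filter fun q => q.1 < q.2 ∧ ∀ c ∈ T, ¬(q.1 < c ∧ c < q.2)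

theorem mem_consecutivePairs {T : Finset α} {a b : α} :
    (a, b) ∈ T.consecutivePairs ↔ a ∈ T ∧ b ∈ T ∧ a < b ∧ ∀ c ∈ T, ¬(a < c ∧ c < b) := by
  simp [consecutivePairs, and_assoc]

theorem exists_consecutivePairs_fst {T : Finset α} {a b : α} (ha : a ∈ T) (hb : b ∈ T)
    (hab : a < b) : ∃ b', (a, b') ∈ T.consecutivePairs := by
  set U := T.filter (a < ·)
  have hU : U.Nonempty := ⟨b, mem_filter.2 ⟨hb, hab⟩⟩
  obtain ⟨hb', hab'⟩ := mem_filter.1 (U.min'_mem hU)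
  exact ⟨_, mem_consecutivePairs.2 ⟨ha, hb', hab', fun c hc ⟨hac, hcb⟩ =>
    lt_irrefl c (hcb.trans_le (U.min'_le c (mem_filter.2 ⟨hc, hac⟩)))⟩⟩

theorem exists_consecutivePairs_snd {T : Finset α} {a b : α} (ha : a ∈ T) (hb : b ∈ T)
    (hab : a < b) : ∃ a', (a', b) ∈ T.consecutivePairs := by
  set U := T.filter (· < b)
  have hU : U.Nonempty := ⟨a, mem_filter.2 ⟨ha, hab⟩⟩
  obtain ⟨ha', ha'b⟩ := mem_filter.1 (U.max'_mem hU)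
  exact ⟨_, mem_consecutivePairs.2 ⟨ha', hb, ha'b, fun c hc ⟨hac, hcb⟩ =>
    lt_irrefl c ((U.le_max' c (mem_filter.2 ⟨hc, hcb⟩)).trans_lt hac)⟩⟩

theorem card_consecutivePairs_add_one {T : Finset α} (hT : T.Nonempty) :
    #T.consecutivePairs + 1 = #T := by
  rw [← card_erase_add_one (T.max'_mem hT)]
  congr 1
  refine card_bij (fun q _ => q.1) ?_ ?_ ?_
  · rintro ⟨a, b⟩ hq
    obtain ⟨ha, hb, hab, -⟩ := mem_consecutivePairs.1 hq
    exact mem_erase.2 ⟨(hab.trans_le (T.le_max' b hb)).ne, ha⟩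
  · rintro ⟨a, b⟩ hq ⟨a', b'⟩ hq' (rfl : a = a')
    obtain ⟨-, hb, hab, hbetween⟩ := mem_consecutivePairs.1 hq
    obtain ⟨-, hb', hab', hbetween'⟩ := mem_consecutivePairs.1 hq'
    rcases lt_trichotomy b b' with h | rfl | h
    · exact (hbetween' b hb ⟨hab, h⟩).elim
    · rfl
    · exact (hbetween b' hb' ⟨hab', h⟩).elim
  · intro a ha
    obtain ⟨hne, ha⟩ := mem_erase.1 ha
    obtain ⟨b, hq⟩ := exists_consecutivePairs_fst ha (T.max'_mem hT)
      (lt_of_le_of_ne (T.le_max' a ha) hne)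
    exact ⟨(a, b), hq, rfl⟩

end Finset

section FiniteMultigraph

variable {V E : Type*} (S : Finset E) (a b : E → V)

/-- In the multigraph with edge set `S`, where `σ` joins `a σ` and `b σ`: the edges from `v` to
a vertex outside `B`. -/
noncomputable def edgesLeaving (B : Finset V) (v : V) : Finset E :=
  S.filter fun σ => (a σ = v ∧ b σ ∉ B) ∨ (b σ = v ∧ a σ ∉ B)

noncomputable def edgesMeeting (A : Finset V) : Finset E :=
  S.filter fun σ => a σ ∈ A ∨ b σ ∈ A

theorem card_edgesMeeting_erase_add_card_edgesLeaving_le {A : Finset V} {v : V} (hv : v ∈ A) :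
    (edgesMeeting S a b (A.erase v)).card + (edgesLeaving S a b A v).card ≤
      (edgesMeeting S a b A).card := by
  rw [← Finset.card_union_of_disjoint]
  · refine Finset.card_le_card fun σ hσ => ?_
    simp only [edgesMeeting, edgesLeaving, Finset.mem_union, Finset.mem_filter,
      Finset.mem_erase] at hσ ⊢
    rcases hσ with ⟨hS, h | h⟩ | ⟨hS, ⟨rfl, -⟩ | ⟨rfl, -⟩⟩ <;> tauto
  · simp only [edgesMeeting, edgesLeaving, Finset.disjoint_filter, Finset.mem_erase]
    rintro σ - (h | h) (⟨rfl, h'⟩ | ⟨rfl, h'⟩) <;> tauto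

theorem sum_add_one_le_card_edgesMeeting (f : V → ℤ) (A : Finset V)
    (h : ∀ B ⊆ A, B.Nonempty → ∃ v ∈ B, f v < (edgesLeaving S a b B v).card) :
    ∑ v ∈ A, (f v + 1) ≤ (edgesMeeting S a b A).card := by
  induction A using Finset.strongInduction with
  | H A ih =>
    rcases A.eq_empty_or_nonempty with rfl | hA
    · simp
    obtain ⟨v, hv, hfv⟩ := h A subset_rfl hA
    have hrest := ih (A.erase v) (Finset.erase_ssubset hv)
      fun B hB => h B (hB.trans (Finset.erase_subset v A))
    have hcard := card_edgesMeeting_erase_add_card_edgesLeaving_le S a b hv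
    rw [← Finset.add_sum_erase A _ hv]
    linarith

end FiniteMultigraph

theorem exists_lt_le_succ_of_lt_of_le {α : Type*} [LinearOrder α] {t : ℕ → α} {s : α} {N : ℕ}
    (h0 : t 0 < s) (hN : s ≤ t N) : ∃ i < N, t i < s ∧ s ≤ t (i + 1) := by
  induction N with
  | zero => exact absurd hN (not_le.2 h0)
  | succ N ih =>
    by_cases h : s ≤ t N
    · obtain ⟨i, hi, hti⟩ := ih h
      exact ⟨i, by omega, hti⟩
    · exact ⟨N, by omega, not_le.1 h, hN⟩

namespace TropicalCurve

variable (C : TropicalCurve)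

theorem dist_edge_le (e : C.G.E) {s t : ℝ} (hs : s ∈ Set.Icc 0 (C.G.len e))
    (ht : t ∈ Set.Icc 0 (C.G.len e)) : dist (C.edge e s) (C.edge e t) ≤ |s - t| := by
  rw [C.path_metric]
  refine csInf_le ⟨0, ?_⟩ ⟨1, fun i => if i = 0 then C.edge e s else C.edge e t,
    fun _ => |s - t|, by simp, by simp, fun i hi => ?_, by simp⟩
  · rintro d ⟨n, p, δ, -, -, hstep, rfl⟩
    refine Finset.sum_nonneg fun i hi => ?_
    obtain ⟨_, _, _, _, _, _, _, hδ⟩ := hstep i (Finset.mem_range.1 hi)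
    rw [hδ]
    positivity
  · obtain rfl : i = 0 := by omega
    exact ⟨e, s, t, hs, ht, by simp, by simp, rfl⟩

theorem continuousOn_edge (e : C.G.E) : ContinuousOn (C.edge e) (Set.Icc 0 (C.G.len e)) :=
  (LipschitzOnWith.of_dist_le_mul (K := 1) fun s hs t ht => by
    simpa [Real.dist_eq] using C.dist_edge_le e hs ht).continuousOn

theorem isConnected_edge_image {e : C.G.E} {a b : ℝ} (hab : a ≤ b)
    (h : Set.Icc a b ⊆ Set.Icc 0 (C.G.len e)) : IsConnected (C.edge e '' Set.Icc a b) :=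
  (isConnected_Icc hab).image _ ((C.continuousOn_edge e).mono h)

theorem isClosed_edge_image {e : C.G.E} {a b : ℝ} (h : Set.Icc a b ⊆ Set.Icc 0 (C.G.len e)) :
    IsClosed (C.edge e '' Set.Icc a b) :=
  (isCompact_Icc.image_of_continuousOn ((C.continuousOn_edge e).mono h)).isClosed

theorem edge_ne_edge {e : C.G.E} {s t : ℝ} (hs : s ∈ Set.Ioo 0 (C.G.len e))
    (ht : t ∈ Set.Icc 0 (C.G.len e)) (hst : s ≠ t) : C.edge e s ≠ C.edge e t := by
  rcases eq_or_lt_of_le ht.1 with rfl | ht0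
  · rw [C.edge_src]
    exact C.interior_not_vtx e s _ hs
  rcases eq_or_lt_of_le ht.2 with rfl | htL
  · rw [C.edge_tgt]
    exact C.interior_not_vtx e s _ hs
  · exact fun h => hst (C.edge_inj e hs ⟨ht0, htL⟩ h)

theorem isBranchAt_iff_of_mem_Ioo {e : C.G.E} {s : ℝ} (hs : s ∈ Set.Ioo 0 (C.G.len e))
    (b : C.G.E × ℝ × Bool) :
    C.IsBranchAt b (C.edge e s) ↔ b = (e, s, true) ∨ b = (e, s, false) := by
  constructor
  · obtain ⟨e', t, d⟩ := b
    rintro ⟨heq, ht, -⟩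
    simp only at heq ht
    rcases eq_or_lt_of_le ht.1 with rfl | ht0
    · exact absurd (heq.symm.trans (C.edge_src e')) (C.interior_not_vtx e s _ hs)
    rcases eq_or_lt_of_le ht.2 with rfl | htL
    · exact absurd (heq.symm.trans (C.edge_tgt e')) (C.interior_not_vtx e s _ hs)
    obtain ⟨rfl, rfl⟩ := C.interior_disjoint e' e t s ⟨ht0, htL⟩ hs heq
    cases d <;> simp
  · rintro (rfl | rfl)
    · exact ⟨rfl, ⟨hs.1.le, hs.2.le⟩, by simpa using hs.2⟩
    · exact ⟨rfl, ⟨hs.1.le, hs.2.le⟩, by simpa using hs.1⟩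

theorem isBranchAt_vtx_iff (v : C.G.V) (b : C.G.E × ℝ × Bool) :
    C.IsBranchAt b (C.vtx v) ↔ (∃ e, C.G.src e = v ∧ b = (e, 0, true)) ∨
      (∃ e, C.G.tgt e = v ∧ b = (e, C.G.len e, false)) := by
  constructor
  · obtain ⟨e, t, d⟩ := b
    rintro ⟨heq, ht, hd⟩
    simp only at heq ht hd
    rcases eq_or_lt_of_le ht.1 with rfl | ht0
    · cases d
      · simp at hd
      · rw [C.edge_src] at heq
        exact Or.inl ⟨e, C.vtx_inj heq, rfl⟩
    rcases eq_or_lt_of_le ht.2 with rfl | htL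
    · cases d
      · rw [C.edge_tgt] at heq
        exact Or.inr ⟨e, C.vtx_inj heq, rfl⟩
      · simp at hd
    · exact absurd heq (C.interior_not_vtx e t v ⟨ht0, htL⟩)
  · rintro (⟨e, rfl, rfl⟩ | ⟨e, rfl, rfl⟩)
    · exact ⟨C.edge_src e, ⟨le_rfl, (C.G.len_pos e).le⟩, by simpa using C.G.len_pos e⟩
    · exact ⟨C.edge_tgt e, ⟨(C.G.len_pos e).le, le_rfl⟩, by simpa using C.G.len_pos e⟩

theorem finite_setOf_edge_mem (pts : Finset C.Γ) (e : C.G.E) :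
    {s : ℝ | s ∈ Set.Ioo 0 (C.G.len e) ∧ C.edge e s ∈ pts}.Finite :=
  Set.Finite.of_finite_image (pts.finite_toSet.subset fun _ ⟨_, hs, h⟩ => h ▸ hs.2)
    ((C.edge_inj e).mono fun _ hs => hs.1)

noncomputable def interiorParams (pts : Finset C.Γ) (e : C.G.E) : Finset ℝ :=
  (C.finite_setOf_edge_mem pts e).toFinset

theorem mem_interiorParams {pts : Finset C.Γ} {e : C.G.E} {s : ℝ} :
    s ∈ C.interiorParams pts e ↔ s ∈ Set.Ioo 0 (C.G.len e) ∧ C.edge e s ∈ pts :=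
  Set.Finite.mem_toFinset _

noncomputable def refinedVertices (pts : Finset C.Γ) : Finset C.Γ :=
  Finset.univ.image C.vtx ∪ Finset.univ.biUnion fun e => (C.interiorParams pts e).image (C.edge e)

theorem subset_refinedVertices (pts : Finset C.Γ) : pts ⊆ C.refinedVertices pts := by
  intro x hx
  rcases C.cover x with ⟨v, rfl⟩ | ⟨e, s, hs, rfl⟩
  · exact Finset.mem_union_left _ (Finset.mem_image_of_mem _ (Finset.mem_univ v))
  · exact Finset.mem_union_right _ (Finset.mem_biUnion.2 ⟨e, Finset.mem_univ e,
      Finset.mem_image_of_mem _ (C.mem_interiorParams.2 ⟨hs, hx⟩)⟩)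

theorem sum_refinedVertices {M : Type*} [AddCommMonoid M] (pts : Finset C.Γ) (φ : C.Γ → M) :
    ∑ x ∈ C.refinedVertices pts, φ x =
      ∑ v, φ (C.vtx v) + ∑ e, ∑ s ∈ C.interiorParams pts e, φ (C.edge e s) := by
  rw [refinedVertices, Finset.sum_union, Finset.sum_image fun v _ w _ h => C.vtx_inj h,
    Finset.sum_biUnion]
  · refine congrArg _ (Finset.sum_congr rfl fun e _ => Finset.sum_image fun s hs t ht h =>
      C.edge_inj e (C.mem_interiorParams.1 hs).1 (C.mem_interiorParams.1 ht).1 h)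
  · intro e _ e' _ hne
    simp only [Function.onFun, Finset.disjoint_left, Finset.mem_image]
    rintro x ⟨s, hs, rfl⟩ ⟨s', hs', heq⟩
    exact hne (C.interior_disjoint e e' s s' (C.mem_interiorParams.1 hs).1
      (C.mem_interiorParams.1 hs').1 heq.symm).1
  · simp only [Finset.disjoint_left, Finset.mem_image, Finset.mem_biUnion]
    rintro x ⟨v, -, rfl⟩ ⟨e, -, s, hs, heq⟩
    exact C.interior_not_vtx e s v (C.mem_interiorParams.1 hs).1 heq

theorem card_refinedVertices (pts : Finset C.Γ) :
    (C.refinedVertices pts).card = Fintype.card C.G.V + ∑ e, (C.interiorParams pts e).card := by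
  simp only [Finset.card_eq_sum_ones, C.sum_refinedVertices pts]
  simp

theorem hasSlopeR_unique {f : C.Γ → ℝ} {e : C.G.E} {t : ℝ} {m m' : ℤ}
    (h : C.HasSlopeR f e t m) (h' : C.HasSlopeR f e t m') : m = m' := by
  obtain ⟨ε, hε, -, hf⟩ := h
  obtain ⟨ε', hε', -, hf'⟩ := h'
  have hδ : 0 < min ε ε' := lt_min hε hε'
  have := (hf (t + min ε ε') ⟨by linarith, by linarith [min_le_left ε ε']⟩).symm.trans
    (hf' (t + min ε ε') ⟨by linarith, by linarith [min_le_right ε ε']⟩)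
  exact_mod_cast mul_right_cancel₀ hδ.ne' (by linarith : (m : ℝ) * min ε ε' = m' * min ε ε')

theorem hasSlopeL_unique {f : C.Γ → ℝ} {e : C.G.E} {t : ℝ} {m m' : ℤ}
    (h : C.HasSlopeL f e t m) (h' : C.HasSlopeL f e t m') : m = m' := by
  obtain ⟨ε, hε, -, hf⟩ := h
  obtain ⟨ε', hε', -, hf'⟩ := h'
  have hδ : 0 < min ε ε' := lt_min hε hε'
  have := (hf (t - min ε ε') ⟨by linarith [min_le_left ε ε'], by linarith⟩).symm.trans
    (hf' (t - min ε ε') ⟨by linarith [min_le_right ε ε'], by linarith⟩)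
  exact_mod_cast mul_right_cancel₀ hδ.ne' (by linarith : (m : ℝ) * min ε ε' = m' * min ε ε')

noncomputable def rightSlope (f : C.Γ → ℝ) (e : C.G.E) (s : ℝ) : ℤ :=
  if h : ∃ m, C.HasSlopeR f e s m then h.choose else 0

noncomputable def leftSlope (f : C.Γ → ℝ) (e : C.G.E) (s : ℝ) : ℤ :=
  if h : ∃ m, C.HasSlopeL f e s m then h.choose else 0

theorem rightSlope_eq {f : C.Γ → ℝ} {e : C.G.E} {s : ℝ} {m : ℤ} (h : C.HasSlopeR f e s m) :
    C.rightSlope f e s = m := by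
  have hex : ∃ m, C.HasSlopeR f e s m := ⟨m, h⟩
  rw [rightSlope, dif_pos hex]
  exact C.hasSlopeR_unique hex.choose_spec h

theorem leftSlope_eq {f : C.Γ → ℝ} {e : C.G.E} {s : ℝ} {m : ℤ} (h : C.HasSlopeL f e s m) :
    C.leftSlope f e s = m := by
  have hex : ∃ m, C.HasSlopeL f e s m := ⟨m, h⟩
  rw [leftSlope, dif_pos hex]
  exact C.hasSlopeL_unique hex.choose_spec h

theorem hasSlopeR_of_affineOn {f : C.Γ → ℝ} {e : C.G.E} {a c s : ℝ} {m : ℤ} {k : ℝ}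
    (hc : c ≤ C.G.len e) (haff : ∀ x ∈ Set.Icc a c, f (C.edge e x) = m * x + k)
    (hs : s ∈ Set.Ico a c) : C.HasSlopeR f e s m :=
  ⟨c - s, by linarith [hs.2], by linarith, fun x hx => by
    rw [haff x ⟨hs.1.trans hx.1, by linarith [hx.2]⟩, haff s ⟨hs.1, hs.2.le⟩]
    ring⟩

theorem hasSlopeL_of_affineOn {f : C.Γ → ℝ} {e : C.G.E} {a c s : ℝ} {m : ℤ} {k : ℝ}
    (ha : 0 ≤ a) (haff : ∀ x ∈ Set.Icc a c, f (C.edge e x) = m * x + k)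
    (hs : s ∈ Set.Ioc a c) : C.HasSlopeL f e s (-m) :=
  ⟨s - a, by linarith [hs.1], by linarith, fun x hx => by
    rw [haff x ⟨by linarith [hx.1], hx.2.trans hs.2⟩, haff s ⟨hs.1.le, hs.2⟩]
    push_cast
    ring⟩

theorem order_eq_of_mem_Ioo {f : C.Γ → ℝ} {e : C.G.E} {s : ℝ} {n : ℤ}
    (hs : s ∈ Set.Ioo 0 (C.G.len e)) (hn : C.HasOrderAt f (C.edge e s) n) :
    n = C.rightSlope f e s + C.leftSlope f e s := by
  obtain ⟨S, m, hS, hslope, rfl⟩ := hn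
  have hS : S = {(e, s, true), (e, s, false)} := by
    ext b
    simp [hS b, C.isBranchAt_iff_of_mem_Ioo hs]
  have hR := hslope (e, s, true) (by simp [hS])
  have hL := hslope (e, s, false) (by simp [hS])
  simp only [if_true, Bool.false_eq_true, if_false] at hR hL
  rw [hS, Finset.sum_pair (by simp), C.rightSlope_eq hR, C.leftSlope_eq hL]

theorem order_vtx_eq {f : C.Γ → ℝ} {v : C.G.V} {n : ℤ} (hn : C.HasOrderAt f (C.vtx v) n) :
    n = ∑ e with C.G.src e = v, C.rightSlope f e 0 +
      ∑ e with C.G.tgt e = v, C.leftSlope f e (C.G.len e) := by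
  obtain ⟨S, m, hS, hslope, rfl⟩ := hn
  have hS : S = ({e | C.G.src e = v} : Finset C.G.E).image (fun e => (e, 0, true)) ∪
      ({e | C.G.tgt e = v} : Finset C.G.E).image (fun e => (e, C.G.len e, false)) := by
    ext b
    simp only [hS b, C.isBranchAt_vtx_iff, Finset.mem_union, Finset.mem_image,
      Finset.mem_filter, Finset.mem_univ, true_and]
    constructor <;> rintro (⟨e, he, rfl⟩ | ⟨e, he, rfl⟩) <;> simp [he]
  have hdisj : Disjoint (({e | C.G.src e = v} : Finset C.G.E).image (fun e => (e, 0, true)))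
      (({e | C.G.tgt e = v} : Finset C.G.E).image (fun e => (e, C.G.len e, false))) := by
    simp [Finset.disjoint_left]
  rw [hS, Finset.sum_union hdisj, Finset.sum_image fun _ _ _ _ h => (Prod.ext_iff.1 h).1,
    Finset.sum_image fun _ _ _ _ h => (Prod.ext_iff.1 h).1]
  congr 1 <;> refine Finset.sum_congr rfl fun e he => ?_
  · have h := hslope _ (hS ▸ Finset.mem_union_left _ (Finset.mem_image_of_mem _ he))
    exact (C.rightSlope_eq h).symm
  · have h := hslope _ (hS ▸ Finset.mem_union_right _ (Finset.mem_image_of_mem _ he))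
    exact (C.leftSlope_eq h).symm

theorem sum_order_vtx {f : C.Γ → ℝ} {o : C.Γ → ℤ} (horder : ∀ x, C.HasOrderAt f x (o x)) :
    ∑ v, o (C.vtx v) = ∑ e, (C.rightSlope f e 0 + C.leftSlope f e (C.G.len e)) := by
  simp only [fun v => C.order_vtx_eq (horder (C.vtx v)), Finset.sum_add_distrib]
  congr 1
  · exact Finset.sum_fiberwise _ _ _
  · exact Finset.sum_fiberwise _ _ _

structure IsAffineGrid (f : C.Γ → ℝ) (e : C.G.E) (n : ℕ) (t : ℕ → ℝ) (m : ℕ → ℤ) : Prop where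
  zero : t 0 = 0
  last : t (n + 1) = C.G.len e
  strictMonoOn : StrictMonoOn t (Set.Iic (n + 1))
  affine : ∀ i ≤ n, ∃ k : ℝ, ∀ s ∈ Set.Icc (t i) (t (i + 1)), f (C.edge e s) = m i * s + k

theorem exists_isAffineGrid {f : C.Γ → ℝ} (hf : C.IsRational f) (e : C.G.E) :
    ∃ n t m, C.IsAffineGrid f e n t m := by
  obtain ⟨N, t, hN, h0, hL, hlt, hpiece⟩ := hf.2 e
  obtain ⟨n, rfl⟩ : ∃ n, N = n + 1 := ⟨N - 1, by omega⟩
  choose! m k haff using hpiece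
  exact ⟨n, t, m, h0, hL, strictMonoOn_Iic_of_lt_succ fun i hi => by
    simpa [Order.succ_eq_add_one] using hlt i hi, fun i hi => ⟨k i, haff i (by omega)⟩⟩

namespace IsAffineGrid

variable {C} {f : C.Γ → ℝ} {e : C.G.E} {n : ℕ} {t : ℕ → ℝ} {m : ℕ → ℤ}

theorem lt_succ (h : C.IsAffineGrid f e n t m) {i : ℕ} (hi : i ≤ n) : t i < t (i + 1) :=
  h.strictMonoOn (by simp; omega) (by simp; omega) (by omega)

theorem mem_Icc (h : C.IsAffineGrid f e n t m) {i : ℕ} (hi : i ≤ n + 1) :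
    t i ∈ Set.Icc 0 (C.G.len e) := by
  rw [← h.zero, ← h.last]
  exact ⟨h.strictMonoOn.monotoneOn (by simp) (by simpa using hi) (Nat.zero_le i),
    h.strictMonoOn.monotoneOn (by simpa using hi) (by simp) hi⟩

theorem succ_mem_Ioo (h : C.IsAffineGrid f e n t m) {i : ℕ} (hi : i < n) :
    t (i + 1) ∈ Set.Ioo 0 (C.G.len e) := by
  rw [← h.zero, ← h.last]
  exact ⟨h.strictMonoOn (by simp) (by simp; omega) (by omega),
    h.strictMonoOn (by simp; omega) (by simp) (by omega)⟩

theorem rightSlope_eq (h : C.IsAffineGrid f e n t m) {i : ℕ} (hi : i ≤ n) {s : ℝ}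
    (hs : s ∈ Set.Ico (t i) (t (i + 1))) : C.rightSlope f e s = m i := by
  obtain ⟨k, hk⟩ := h.affine i hi
  exact C.rightSlope_eq (C.hasSlopeR_of_affineOn (h.mem_Icc (by omega)).2 hk hs)

theorem leftSlope_eq (h : C.IsAffineGrid f e n t m) {i : ℕ} (hi : i ≤ n) {s : ℝ}
    (hs : s ∈ Set.Ioc (t i) (t (i + 1))) : C.leftSlope f e s = -m i := by
  obtain ⟨k, hk⟩ := h.affine i hi
  exact C.leftSlope_eq (C.hasSlopeL_of_affineOn (h.mem_Icc (by omega)).1 hk hs)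

theorem order_succ_eq (h : C.IsAffineGrid f e n t m) {o : C.Γ → ℤ}
    (horder : ∀ x, C.HasOrderAt f x (o x)) {i : ℕ} (hi : i < n) :
    o (C.edge e (t (i + 1))) = m (i + 1) - m i := by
  rw [C.order_eq_of_mem_Ioo (h.succ_mem_Ioo hi) (horder _),
    h.rightSlope_eq (by omega) ⟨le_rfl, h.lt_succ (by omega)⟩,
    h.leftSlope_eq (by omega) ⟨h.lt_succ (by omega), le_rfl⟩]
  ring

theorem order_eq_zero (h : C.IsAffineGrid f e n t m) {o : C.Γ → ℤ}
    (horder : ∀ x, C.HasOrderAt f x (o x)) {s : ℝ} (hs : s ∈ Set.Ioo 0 (C.G.len e))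
    (hgrid : ∀ i < n, t (i + 1) ≠ s) : o (C.edge e s) = 0 := by
  obtain ⟨i, hi, hts, hst⟩ := exists_lt_le_succ_of_lt_of_le (t := t) (N := n + 1)
    (h.zero ▸ hs.1) (h.last ▸ hs.2.le)
  have hst : s < t (i + 1) := by
    refine lt_of_le_of_ne hst fun hs' => ?_
    rcases Nat.lt_or_ge i n with hin | hin
    · exact hgrid i hin hs'.symm
    · exact hs.2.ne (by rw [hs', ← h.last]; congr 1; omega)
  rw [C.order_eq_of_mem_Ioo hs (horder _), h.rightSlope_eq (by omega) ⟨hts.le, hst⟩,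
    h.leftSlope_eq (by omega) ⟨hts, hst.le⟩]
  ring

theorem sum_order (h : C.IsAffineGrid f e n t m) {o : C.Γ → ℤ}
    (horder : ∀ x, C.HasOrderAt f x (o x)) {Q : Finset ℝ}
    (hQ : ∀ s ∈ Q, s ∈ Set.Ioo 0 (C.G.len e)) (hgrid : ∀ i < n, t (i + 1) ∈ Q) :
    ∑ s ∈ Q, o (C.edge e s) = -(C.rightSlope f e 0 + C.leftSlope f e (C.G.len e)) := by
  have hinj : Set.InjOn (fun i => t (i + 1)) (Finset.range n) := fun i hi j hj hij =>
    Nat.succ_injective (h.strictMonoOn.injOn (by simp at hi ⊢; omega) (by simp at hj ⊢; omega) hij)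
  calc ∑ s ∈ Q, o (C.edge e s) = ∑ s ∈ (Finset.range n).image fun i => t (i + 1), o (C.edge e s) :=
        (Finset.sum_subset (fun s hs => by
          obtain ⟨i, hi, rfl⟩ := Finset.mem_image.1 hs
          exact hgrid i (Finset.mem_range.1 hi))
        fun s hs hsgrid => h.order_eq_zero horder (hQ s hs) fun i hi hts =>
          hsgrid (hts ▸ Finset.mem_image_of_mem _ (Finset.mem_range.2 hi))).symm
    _ = ∑ i ∈ Finset.range n, (m (i + 1) - m i) := by
        rw [Finset.sum_image hinj]
        exact Finset.sum_congr rfl fun i hi => h.order_succ_eq horder (Finset.mem_range.1 hi)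
    _ = m n - m 0 := Finset.sum_range_sub m n
    _ = -(C.rightSlope f e 0 + C.leftSlope f e (C.G.len e)) := by
        rw [h.rightSlope_eq (Nat.zero_le n) (h.zero ▸ ⟨le_rfl, h.zero ▸ h.lt_succ (Nat.zero_le n)⟩),
          h.leftSlope_eq le_rfl (h.last ▸ ⟨h.lt_succ le_rfl, le_rfl⟩)]
        ring

end IsAffineGrid

theorem deg_eq_of_linEquiv {D₁ D₂ : Divisor C} (h : C.LinEquiv D₁ D₂) : C.deg D₁ = C.deg D₂ := by
  obtain ⟨f, hf, horder⟩ := h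
  choose n t m hgrid using C.exists_isAffineGrid hf
  set pts := D₁.support ∪ D₂.support ∪
    Finset.univ.biUnion fun e => (Finset.range (n e)).image fun i => C.edge e (t e (i + 1))
  have hdeg : ∀ D : Divisor C, D.support ⊆ pts → C.deg D = ∑ x ∈ C.refinedVertices pts, D x :=
    fun D hD => Finsupp.sum_of_support_subset D (hD.trans (C.subset_refinedVertices pts)) _
      fun _ _ => rfl
  have hgrid_mem : ∀ e, ∀ i < n e, t e (i + 1) ∈ C.interiorParams pts e := fun e i hi =>
    C.mem_interiorParams.2 ⟨(hgrid e).succ_mem_Ioo hi, Finset.mem_union_right _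
      (Finset.mem_biUnion.2 ⟨e, Finset.mem_univ e,
        Finset.mem_image_of_mem _ (Finset.mem_range.2 hi)⟩)⟩
  have hsum : ∑ x ∈ C.refinedVertices pts, (D₁ x - D₂ x) = 0 := by
    rw [C.sum_refinedVertices, C.sum_order_vtx horder, ← Finset.sum_add_distrib]
    refine Finset.sum_eq_zero fun e _ => ?_
    rw [(hgrid e).sum_order horder (fun s hs => (C.mem_interiorParams.1 hs).1) (hgrid_mem e),
      add_neg_cancel]
  rw [hdeg D₁ (by intro x; simp +contextual [pts]), hdeg D₂ (by intro x; simp +contextual [pts]),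
    ← sub_eq_zero, ← Finset.sum_sub_distrib, hsum]

noncomputable def breakParams (pts : Finset C.Γ) (e : C.G.E) : Finset ℝ :=
  insert 0 (insert (C.G.len e) (C.interiorParams pts e))

/-- The edges of the model refined by `pts`: `⟨e, a, b⟩` stands for `edge e '' [a, b]`. -/
noncomputable def refinedEdges (pts : Finset C.Γ) : Finset ((_ : C.G.E) × ℝ × ℝ) :=
  Finset.univ.sigma fun e => (C.breakParams pts e).consecutivePairs

def seg (σ : (_ : C.G.E) × ℝ × ℝ) : Set C.Γ := C.edge σ.1 '' Set.Icc σ.2.1 σ.2.2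

def segSrc (σ : (_ : C.G.E) × ℝ × ℝ) : C.Γ := C.edge σ.1 σ.2.1

def segTgt (σ : (_ : C.G.E) × ℝ × ℝ) : C.Γ := C.edge σ.1 σ.2.2

theorem breakParams_subset_Icc {pts : Finset C.Γ} {e : C.G.E} {s : ℝ}
    (hs : s ∈ C.breakParams pts e) : s ∈ Set.Icc 0 (C.G.len e) := by
  rcases Finset.mem_insert.1 hs with rfl | hs
  · exact ⟨le_rfl, (C.G.len_pos e).le⟩
  rcases Finset.mem_insert.1 hs with rfl | hs
  · exact ⟨(C.G.len_pos e).le, le_rfl⟩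
  · exact Set.Ioo_subset_Icc_self (C.mem_interiorParams.1 hs).1

theorem card_breakParams (pts : Finset C.Γ) (e : C.G.E) :
    (C.breakParams pts e).card = (C.interiorParams pts e).card + 2 := by
  have hL : C.G.len e ∉ C.interiorParams pts e := fun h =>
    (C.mem_interiorParams.1 h).1.2.false
  have h0 : (0 : ℝ) ∉ insert (C.G.len e) (C.interiorParams pts e) := by
    rw [Finset.mem_insert, not_or]
    exact ⟨(C.G.len_pos e).ne, fun h => (C.mem_interiorParams.1 h).1.1.false⟩
  rw [breakParams, Finset.card_insert_of_notMem h0, Finset.card_insert_of_notMem hL]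

theorem card_refinedEdges (pts : Finset C.Γ) :
    (C.refinedEdges pts).card = Fintype.card C.G.E + ∑ e, (C.interiorParams pts e).card := by
  have h : ∀ e, (C.breakParams pts e).consecutivePairs.card = (C.interiorParams pts e).card + 1 :=
    fun e => by
      have := Finset.card_consecutivePairs_add_one (T := C.breakParams pts e) ⟨0, by
        simp [breakParams]⟩
      rw [C.card_breakParams] at this
      omega
  simp only [refinedEdges, Finset.card_sigma, h, Finset.sum_add_distrib, Finset.sum_const,
    Finset.card_univ, smul_eq_mul, mul_one]
  ring

theorem card_refinedEdges_sub_card_refinedVertices (pts : Finset C.Γ) :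
    ((C.refinedEdges pts).card : ℤ) - (C.refinedVertices pts).card + 1 = C.genus := by
  rw [C.card_refinedEdges, C.card_refinedVertices, genus]
  push_cast
  ring

theorem mem_refinedEdges {pts : Finset C.Γ} {e : C.G.E} {a b : ℝ} :
    ⟨e, a, b⟩ ∈ C.refinedEdges pts ↔ (a, b) ∈ (C.breakParams pts e).consecutivePairs := by
  simp [refinedEdges]

theorem Icc_subset_of_mem_refinedEdges {pts : Finset C.Γ} {e : C.G.E} {a b : ℝ}
    (hσ : ⟨e, a, b⟩ ∈ C.refinedEdges pts) : Set.Icc a b ⊆ Set.Icc 0 (C.G.len e) := by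
  obtain ⟨ha, hb, -⟩ := Finset.mem_consecutivePairs.1 (C.mem_refinedEdges.1 hσ)
  exact Set.Icc_subset_Icc (C.breakParams_subset_Icc ha).1 (C.breakParams_subset_Icc hb).2

theorem edge_notMem_of_mem_refinedEdges {pts : Finset C.Γ} {e : C.G.E} {a b s : ℝ}
    (hσ : ⟨e, a, b⟩ ∈ C.refinedEdges pts) (hs : s ∈ Set.Ioo a b) : C.edge e s ∉ pts := by
  obtain ⟨ha, hb, -, hbetween⟩ := Finset.mem_consecutivePairs.1 (C.mem_refinedEdges.1 hσ)
  refine fun h => hbetween s ?_ hs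
  refine Finset.mem_insert_of_mem (Finset.mem_insert_of_mem (C.mem_interiorParams.2 ⟨?_, h⟩))
  exact ⟨(C.breakParams_subset_Icc ha).1.trans_lt hs.1,
    hs.2.trans_le (C.breakParams_subset_Icc hb).2⟩

theorem mem_breakParams_of_edge_mem_refinedVertices {pts : Finset C.Γ} {e : C.G.E} {t : ℝ}
    (ht : t ∈ Set.Icc 0 (C.G.len e)) (hv : C.edge e t ∈ C.refinedVertices pts) :
    t ∈ C.breakParams pts e := by
  rcases eq_or_lt_of_le ht.1 with rfl | ht0
  · exact Finset.mem_insert_self _ _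
  rcases eq_or_lt_of_le ht.2 with rfl | htL
  · exact Finset.mem_insert_of_mem (Finset.mem_insert_self _ _)
  refine Finset.mem_insert_of_mem (Finset.mem_insert_of_mem ?_)
  simp only [refinedVertices, Finset.mem_union, Finset.mem_image, Finset.mem_biUnion,
    Finset.mem_univ, true_and] at hv
  rcases hv with ⟨w, hw⟩ | ⟨e', s, hs, heq⟩
  · exact absurd hw.symm (C.interior_not_vtx e t w ⟨ht0, htL⟩)
  · obtain ⟨rfl, rfl⟩ := C.interior_disjoint e' e s t (C.mem_interiorParams.1 hs).1 ⟨ht0, htL⟩ heq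
    exact hs

theorem exists_refinedEdges_of_isBranchAt {pts : Finset C.Γ} {v : C.Γ}
    (hv : v ∈ C.refinedVertices pts) {b : C.G.E × ℝ × Bool} (hb : C.IsBranchAt b v) :
    (b.2.2 = true ∧ ∃ c, ⟨b.1, b.2.1, c⟩ ∈ C.refinedEdges pts) ∨
      (b.2.2 = false ∧ ∃ a, ⟨b.1, a, b.2.1⟩ ∈ C.refinedEdges pts) := by
  obtain ⟨e, t, d⟩ := b
  obtain ⟨rfl, ht, hd⟩ := hb
  have htb := C.mem_breakParams_of_edge_mem_refinedVertices ht hv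
  simp only [C.mem_refinedEdges] at hd ⊢
  cases d
  · simp only [Bool.false_eq_true, if_false] at hd
    exact Or.inr ⟨rfl, Finset.exists_consecutivePairs_snd (Finset.mem_insert_self _ _) htb hd⟩
  · simp only [if_true] at hd
    exact Or.inl ⟨rfl, Finset.exists_consecutivePairs_fst htb
      (Finset.mem_insert_of_mem (Finset.mem_insert_self _ _)) hd⟩

theorem not_branchLeaving_right {X : Set C.Γ} {e : C.G.E} {t c : ℝ} (ht : 0 ≤ t) (htc : t < c)
    (hc : c ≤ C.G.len e) (hX : C.edge e '' Set.Icc t c ⊆ X) :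
    ¬C.BranchLeaving X (C.edge e t) (e, t, true) := by
  rintro ⟨-, hleave⟩
  simp only [if_true] at hleave
  obtain ⟨ε, hε, -, hcl⟩ := hleave
  set s := min (t + ε) ((t + c) / 2)
  have hts : t < s := lt_min (by linarith) (by linarith)
  have hsc : s < c := (min_le_right _ _).trans_lt (by linarith)
  refine C.edge_ne_edge ⟨by linarith, by linarith⟩ ⟨ht, by linarith⟩ hts.ne'
    (hcl s ⟨hts, min_le_left _ _⟩ (hX ⟨s, ⟨hts.le, hsc.le⟩, rfl⟩))

theorem not_branchLeaving_left {X : Set C.Γ} {e : C.G.E} {a t : ℝ} (ha : 0 ≤ a) (hat : a < t)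
    (ht : t ≤ C.G.len e) (hX : C.edge e '' Set.Icc a t ⊆ X) :
    ¬C.BranchLeaving X (C.edge e t) (e, t, false) := by
  rintro ⟨-, hleave⟩
  simp only [Bool.false_eq_true, if_false] at hleave
  obtain ⟨ε, hε, -, hcl⟩ := hleave
  set s := max (t - ε) ((a + t) / 2)
  have hst : s < t := max_lt (by linarith) (by linarith)
  have has : a < s := (by linarith : a < (a + t) / 2).trans_le (le_max_right _ _)
  refine C.edge_ne_edge ⟨by linarith, by linarith⟩ ⟨by linarith, ht⟩ hst.ne
    (hcl s ⟨le_max_left _ _, hst⟩ (hX ⟨s, ⟨has.le, hst.le⟩, rfl⟩))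

theorem outDeg_eq_zero_of_seg_subset {pts : Finset C.Γ} {X : Set C.Γ} {e : C.G.E} {a b s : ℝ}
    (hσ : ⟨e, a, b⟩ ∈ C.refinedEdges pts) (hX : C.seg ⟨e, a, b⟩ ⊆ X) (hs : s ∈ Set.Ioo a b) :
    C.outDeg X (C.edge e s) = 0 := by
  have hab := C.Icc_subset_of_mem_refinedEdges hσ
  have ha : 0 ≤ a := (hab ⟨le_rfl, (hs.1.trans hs.2).le⟩).1
  have hb : b ≤ C.G.len e := (hab ⟨(hs.1.trans hs.2).le, le_rfl⟩).2
  have hempty : {β | C.BranchLeaving X (C.edge e s) β} = ∅ := by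
    refine Set.eq_empty_iff_forall_notMem.2 fun β hβ => ?_
    rcases (C.isBranchAt_iff_of_mem_Ioo ⟨by linarith [hs.1], by linarith [hs.2]⟩ β).1 hβ.1
      with rfl | rfl
    · exact C.not_branchLeaving_right (by linarith [hs.1]) hs.2 hb
        ((Set.image_mono (Set.Icc_subset_Icc hs.1.le le_rfl)).trans hX) hβ
    · exact C.not_branchLeaving_left ha hs.1 (by linarith [hs.2])
        ((Set.image_mono (Set.Icc_subset_Icc le_rfl hs.2.le)).trans hX) hβ
  rw [outDeg, hempty, Set.ncard_empty]

theorem outDeg_le_card_edgesLeaving {pts : Finset C.Γ} {X : Set C.Γ} {A : Finset C.Γ} {v : C.Γ}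
    (hA : A ⊆ C.refinedVertices pts) (hv : v ∈ A)
    (hseg : ∀ σ ∈ C.refinedEdges pts, C.segSrc σ ∈ A → C.segTgt σ ∈ A → v ∈ C.seg σ →
      C.seg σ ⊆ X) :
    C.outDeg X v ≤ (edgesLeaving (C.refinedEdges pts) C.segSrc C.segTgt A v).card := by
  set L := edgesLeaving (C.refinedEdges pts) C.segSrc C.segTgt A v
  set branch : (_ : C.G.E) × ℝ × ℝ → C.G.E × ℝ × Bool := fun σ =>
    if C.segSrc σ = v then (σ.1, σ.2.1, true) else (σ.1, σ.2.2, false)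
  have hsub : {β | C.BranchLeaving X v β} ⊆ L.image branch := by
    rintro ⟨e, t, d⟩ hβ
    obtain ⟨⟨rfl, -, -⟩, -⟩ := id hβ
    rcases C.exists_refinedEdges_of_isBranchAt (hA hv) hβ.1 with ⟨rfl, c, hσ⟩ | ⟨rfl, a, hσ⟩
    · have htc := (Finset.mem_consecutivePairs.1 (C.mem_refinedEdges.1 hσ)).2.2.1
      have hIcc := C.Icc_subset_of_mem_refinedEdges hσ
      have htgt : C.segTgt ⟨e, t, c⟩ ∉ A := fun h =>
        C.not_branchLeaving_right (hIcc ⟨le_rfl, htc.le⟩).1 htc (hIcc ⟨htc.le, le_rfl⟩).2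
          (hseg _ hσ hv h ⟨t, ⟨le_rfl, htc.le⟩, rfl⟩) hβ
      exact Finset.mem_image.2 ⟨⟨e, t, c⟩, Finset.mem_filter.2 ⟨hσ, Or.inl ⟨rfl, htgt⟩⟩,
        by simp [branch, segSrc]⟩
    · have hat := (Finset.mem_consecutivePairs.1 (C.mem_refinedEdges.1 hσ)).2.2.1
      have hIcc := C.Icc_subset_of_mem_refinedEdges hσ
      have hsrc : C.segSrc ⟨e, a, t⟩ ∉ A := fun h =>
        C.not_branchLeaving_left (hIcc ⟨le_rfl, hat.le⟩).1 hat (hIcc ⟨hat.le, le_rfl⟩).2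
          (hseg _ hσ h hv ⟨t, ⟨hat.le, le_rfl⟩, rfl⟩) hβ
      have hne : C.segSrc ⟨e, a, t⟩ ≠ C.edge e t := fun h => hsrc (h ▸ hv)
      exact Finset.mem_image.2 ⟨⟨e, a, t⟩, Finset.mem_filter.2 ⟨hσ, Or.inr ⟨rfl, hsrc⟩⟩,
        by simp [branch, hne]⟩
  calc C.outDeg X v ≤ (L.image branch : Set (C.G.E × ℝ × Bool)).ncard :=
        Set.ncard_le_ncard hsub (Finset.finite_toSet _)
    _ = (L.image branch).card := Set.ncard_coe_finset _
    _ ≤ L.card := Finset.card_image_le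

def refinedSpan (pts A : Finset C.Γ) : Set C.Γ :=
  ↑A ∪ ⋃ σ ∈ (C.refinedEdges pts).filter (fun σ => C.segSrc σ ∈ A ∧ C.segTgt σ ∈ A), C.seg σ

theorem isClosed_refinedSpan (pts A : Finset C.Γ) : IsClosed (C.refinedSpan pts A) :=
  A.finite_toSet.isClosed.union (Finset.finite_toSet _ |>.isClosed_biUnion fun _ hσ =>
    C.isClosed_edge_image (C.Icc_subset_of_mem_refinedEdges (Finset.mem_filter.1 hσ).1))

theorem exists_mem_Ioo_of_mem_refinedSpan {pts A : Finset C.Γ} {x : C.Γ}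
    (hx : x ∈ C.refinedSpan pts A) (hxA : x ∉ A) :
    ∃ σ ∈ C.refinedEdges pts, C.segSrc σ ∈ A ∧ C.segTgt σ ∈ A ∧
      ∃ s ∈ Set.Ioo σ.2.1 σ.2.2, C.edge σ.1 s = x := by
  obtain ⟨σ, hσ, s, hs, rfl⟩ : ∃ σ ∈ (C.refinedEdges pts).filter
      (fun σ => C.segSrc σ ∈ A ∧ C.segTgt σ ∈ A), x ∈ C.seg σ := by
    simpa [refinedSpan, hxA] using hx
  obtain ⟨hσ, hsrc, htgt⟩ := Finset.mem_filter.1 hσ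
  exact ⟨σ, hσ, hsrc, htgt, s, ⟨lt_of_le_of_ne hs.1 fun h => hxA (h ▸ hsrc),
    lt_of_le_of_ne hs.2 fun h => hxA (h ▸ htgt)⟩, rfl⟩

theorem seg_subset_connectedComponentIn {pts A : Finset C.Γ} {σ : (_ : C.G.E) × ℝ × ℝ}
    (hσ : σ ∈ C.refinedEdges pts) (hsrc : C.segSrc σ ∈ A) (htgt : C.segTgt σ ∈ A) {x y : C.Γ}
    (hx : x ∈ C.seg σ) (hxy : x ∈ connectedComponentIn (C.refinedSpan pts A) y) :
    C.seg σ ⊆ connectedComponentIn (C.refinedSpan pts A) y := by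
  have hab := (Finset.mem_consecutivePairs.1 (C.mem_refinedEdges.1 hσ)).2.2.1
  rw [connectedComponentIn_eq hxy]
  exact (C.isConnected_edge_image hab.le (C.Icc_subset_of_mem_refinedEdges hσ)).isPreconnected
    |>.subset_connectedComponentIn hx (Set.subset_union_of_subset_right
      (Set.subset_biUnion_of_mem (u := C.seg) (Finset.mem_filter.2 ⟨hσ, hsrc, htgt⟩)) _)

variable {C} in
theorem IsReduced.exists_lt_card_edgesLeaving {P : C.Γ} {DP : Divisor C}
    (hred : C.IsReduced P DP) {pts : Finset C.Γ} (hP : P ∈ pts) {A : Finset C.Γ}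
    (hA : A ⊆ (C.refinedVertices pts).erase P) (hAne : A.Nonempty) :
    ∃ v ∈ A, DP v < (edgesLeaving (C.refinedEdges pts) C.segSrc C.segTgt A v).card := by
  obtain ⟨a₀, ha₀⟩ := hAne
  set X := connectedComponentIn (C.refinedSpan pts A) a₀
  have hX : IsClosed X := (C.isClosed_refinedSpan pts A).connectedComponentIn a₀
  have hXY : X ⊆ C.refinedSpan pts A := connectedComponentIn_subset _ a₀
  have hPX : P ∉ X := fun h => by
    obtain ⟨⟨e, a, b⟩, hσ, -, -, s, hs, rfl⟩ := C.exists_mem_Ioo_of_mem_refinedSpan (hXY h)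
      fun h => (Finset.mem_erase.1 (hA h)).1 rfl
    exact C.edge_notMem_of_mem_refinedEdges hσ hs hP
  obtain ⟨v, hvfr, hvlt⟩ :=
    hred.2 X hX (isConnected_connectedComponentIn_iff.2 (Or.inl ha₀)) hPX
  have hvX : v ∈ X := hX.frontier_subset hvfr
  have hvA : v ∈ A := by
    by_contra hvA
    obtain ⟨⟨e, a, b⟩, hσ, hsrc, htgt, s, hs, rfl⟩ :=
      C.exists_mem_Ioo_of_mem_refinedSpan (hXY hvX) hvA
    have hzero : C.outDeg X (C.edge e s) = 0 := C.outDeg_eq_zero_of_seg_subset hσ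
      (C.seg_subset_connectedComponentIn hσ hsrc htgt ⟨s, Set.Ioo_subset_Icc_self hs, rfl⟩ hvX) hs
    rw [hzero, Nat.cast_zero] at hvlt
    exact hvlt.not_ge (hred.1 _ fun h => hPX (h ▸ hvX))
  refine ⟨v, hvA, hvlt.trans_le ?_⟩
  exact_mod_cast C.outDeg_le_card_edgesLeaving (hA.trans (Finset.erase_subset P _)) hvA
    fun σ hσ hsrc htgt hvσ => C.seg_subset_connectedComponentIn hσ hsrc htgt hvσ hvX

variable {C} in
theorem IsReduced.sum_erase_le_genus {P : C.Γ} {DP : Divisor C} (hred : C.IsReduced P DP) :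
    ∑ x ∈ DP.support.erase P, DP x ≤ C.genus := by
  set pts := insert P DP.support
  have hP : P ∈ pts := Finset.mem_insert_self P _
  set A := (C.refinedVertices pts).erase P
  have hburn := sum_add_one_le_card_edgesMeeting (C.refinedEdges pts) C.segSrc C.segTgt DP A
    fun B hB hBne => hred.exists_lt_card_edgesLeaving hP hB hBne
  have hmeet : (edgesMeeting (C.refinedEdges pts) C.segSrc C.segTgt A).card ≤
      (C.refinedEdges pts).card := Finset.card_filter_le _ _
  have hA : A.card + 1 = (C.refinedVertices pts).card :=
    Finset.card_erase_add_one (C.subset_refinedVertices pts hP)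
  have hsupp : ∑ x ∈ DP.support.erase P, DP x ≤ ∑ x ∈ A, DP x :=
    Finset.sum_le_sum_of_subset_of_nonneg
      (Finset.erase_subset_erase P ((Finset.subset_insert P _).trans
        (C.subset_refinedVertices pts)))
      fun x hx _ => hred.1 x (Finset.ne_of_mem_erase hx)
  have hEuler := C.card_refinedEdges_sub_card_refinedVertices pts
  rw [Finset.sum_add_distrib, Finset.sum_const, nsmul_one] at hburn
  omega

theorem deg_eq_add_sum_erase (D : Divisor C) (P : C.Γ) :
    C.deg D = D P + ∑ x ∈ D.support.erase P, D x := by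
  rw [deg, Finsupp.sum_of_support_subset D (Finset.subset_insert P D.support) _ fun _ _ => rfl,
    ← Finset.add_sum_erase _ _ (Finset.mem_insert_self P D.support),
    Finset.erase_insert_eq_erase]

end TropicalCurve

theorem reduced_divisor_coeff_ge_deg_sub_genus_general (C : TropicalCurve) (g : ℕ)
    (hg : C.genus = g) (D : TropicalCurve.Divisor C)
    (P : C.Γ) (DP : TropicalCurve.Divisor C)
    (h₁ : C.IsReduced P DP) (h₂ : C.LinEquiv DP D) :
    C.deg D - (g : ℤ) ≤ DP P := by
  have hdeg := C.deg_eq_add_sum_erase DP P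
  rw [C.deg_eq_of_linEquiv h₂] at hdeg
  have hgenus := h₁.sum_erase_le_genus
  omega

/-- Let `Γ` be a tropical curve of genus `g`, let `D` be a
divisor of nonnegative rank on `Γ`, and let `P ∈ Γ`. Then the coefficient of the
`P`-reduced divisor `D_P` at `P` satisfies `D_P(P) ≥ deg(D) − g`. -/
theorem reduced_divisor_coeff_ge_deg_sub_genus (C : TropicalCurve) (g : ℕ)
    (hg : C.genus = g) (D : TropicalCurve.Divisor C) (hD : 0 ≤ C.rank D)
    (P : C.Γ) (DP : TropicalCurve.Divisor C)
    (h₁ : C.IsReduced P DP) (h₂ : C.LinEquiv DP D) :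
    C.deg D - (g : ℤ) ≤ DP P :=
  reduced_divisor_coeff_ge_deg_sub_genus_general C g hg D P DP h₁ h₂
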